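/- arXiv:1409.4393 — 5 statements merged into one kernel-verified Lean document; each statement's English description precedes it below -/
import Mathlib

section
/- Let N > 0 and η > 0 be real numbers, and define the sum-rate function R(ρ) = N · log(1 + 10^(ρ/10)/η) for ρ ∈ ℝ (logarithms are natural). Then the second derivative R''(ρ) attains its maximum over ℝ at the unique point ρ_bend = 10·log(η)/log(10); i.e., R''(ρ_bend) ≥ R''(ρ) for all ρ, with equality only at ρ = ρ_bend. -/
/-!
With `c = log 10 / 10` and `10^(ρ/10) / η = exp (c ρ - log η)`, the sum-rate is
`R ρ = N · softplus (c ρ - log η)` for `softplus u = log (1 + exp u)`, whose derivative is the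
logistic sigmoid `σ`. Hence `R'' ρ = N c² σ(u) (1 - σ(u))` at `u = c ρ - log η`, and
`σ (1 - σ) ≤ 1/4` with equality exactly when `σ(u) = 1/2`, i.e. `u = 0`.
-/

open Real

namespace Real

noncomputable def softplus (x : ℝ) : ℝ := log (1 + exp x)

lemma contDiff_softplus {n : WithTop ℕ∞} : ContDiff ℝ n softplus :=
  (contDiff_const.add contDiff_exp).log fun x => by positivity

lemma exp_div_one_add_exp (x : ℝ) : exp x / (1 + exp x) = sigmoid x := by
  rw [sigmoid_def, exp_neg]
  field_simp
  ring

lemma hasDerivAt_softplus (x : ℝ) : HasDerivAt softplus (sigmoid x) x := by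
  have h := ((hasDerivAt_exp x).const_add 1).log (by positivity)
  rwa [exp_div_one_add_exp] at h

lemma deriv_softplus : deriv softplus = sigmoid :=
  funext fun x => (hasDerivAt_softplus x).deriv

lemma iteratedDeriv_two_softplus :
    iteratedDeriv 2 softplus = fun x => sigmoid x * (1 - sigmoid x) := by
  rw [iteratedDeriv_succ, iteratedDeriv_one, deriv_softplus, deriv_sigmoid]

lemma sigmoid_mul_one_sub_sigmoid_le (x : ℝ) : sigmoid x * (1 - sigmoid x) ≤ 4⁻¹ := by
  nlinarith [sq_nonneg (sigmoid x - 2⁻¹)]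

lemma sigmoid_mul_one_sub_sigmoid_eq_iff {x : ℝ} :
    sigmoid x * (1 - sigmoid x) = 4⁻¹ ↔ x = 0 := by
  refine ⟨fun h => sigmoid_injective ?_, fun h => by norm_num [h, sigmoid_zero]⟩
  rw [sigmoid_zero]
  nlinarith [sq_nonneg (sigmoid x - 2⁻¹)]

lemma iteratedDeriv_two_const_mul_softplus_affine (N c a x : ℝ) :
    iteratedDeriv 2 (fun y => N * softplus (c * y - a)) x =
      N * c ^ 2 * (sigmoid (c * x - a) * (1 - sigmoid (c * x - a))) := by
  have shifted : ContDiff ℝ 2 fun y => softplus (y - a) :=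
    contDiff_softplus.comp (contDiff_id.sub contDiff_const)
  rw [iteratedDeriv_const_mul_field, iteratedDeriv_comp_const_mul shifted,
    iteratedDeriv_comp_sub_const, iteratedDeriv_two_softplus]
  ring

section Peak

variable {N c : ℝ} (a : ℝ) {x : ℝ}

lemma iteratedDeriv_two_const_mul_softplus_affine_le (hN : 0 < N) :
    iteratedDeriv 2 (fun y => N * softplus (c * y - a)) x ≤ N * c ^ 2 / 4 := by
  rw [iteratedDeriv_two_const_mul_softplus_affine, div_eq_mul_inv]
  exact mul_le_mul_of_nonneg_left (sigmoid_mul_one_sub_sigmoid_le _) (by positivity)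

lemma iteratedDeriv_two_const_mul_softplus_affine_eq_iff (hN : 0 < N) (hc : c ≠ 0) :
    iteratedDeriv 2 (fun y => N * softplus (c * y - a)) x = N * c ^ 2 / 4 ↔ c * x - a = 0 := by
  rw [iteratedDeriv_two_const_mul_softplus_affine, div_eq_mul_inv,
    mul_right_inj' (by positivity), sigmoid_mul_one_sub_sigmoid_eq_iff]

end Peak

end Real

/-- The bend point `ρ_bend = 10·log η / log 10` is the unique global maximizer of the
second derivative of the sum-rate `R(ρ) = N·log(1 + 10^(ρ/10)/η)`. -/
theorem bend_point_unique_max (N η : ℝ) (hN : 0 < N) (hη : 0 < η)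
    (R : ℝ → ℝ) (hR : ∀ ρ : ℝ, R ρ = N * Real.log (1 + (10 : ℝ) ^ (ρ / 10) / η)) :
    (∀ ρ : ℝ, iteratedDeriv 2 R ρ ≤ iteratedDeriv 2 R (10 * Real.log η / Real.log 10)) ∧
    (∀ ρ : ℝ, iteratedDeriv 2 R ρ = iteratedDeriv 2 R (10 * Real.log η / Real.log 10) →
      ρ = 10 * Real.log η / Real.log 10) := by
  set c : ℝ := Real.log 10 / 10 with hc_def
  have hc : c ≠ 0 := by positivity
  have hRfun : R = fun ρ => N * softplus (c * ρ - Real.log η) := by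
    funext ρ
    rw [hR, softplus, exp_sub, exp_log hη, rpow_def_of_pos (by norm_num), hc_def]
    ring_nf
  have hbend : c * (10 * Real.log η / Real.log 10) - Real.log η = 0 := by
    rw [hc_def]
    field_simp
    ring
  subst hRfun
  have peak := (iteratedDeriv_two_const_mul_softplus_affine_eq_iff _ hN hc).mpr hbend
  refine ⟨fun ρ => peak ▸ iteratedDeriv_two_const_mul_softplus_affine_le _ hN, fun ρ hρ => ?_⟩
  have hρ' := (iteratedDeriv_two_const_mul_softplus_affine_eq_iff _ hN hc).mp (hρ.trans peak)
  rw [hc_def] at hρ'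
  field_simp at hρ' ⊢
  linarith
end

section
/- Let N > 0 and η > 0 be real numbers, and define R(ρ) = N · log(1 + 10^(ρ/10)/η) for ρ ∈ ℝ. Then for all ρ ∈ ℝ, the third derivative of R satisfies R'''(ρ) = (N/η²)·(log(10)/10)³ · (η·10^(ρ/10) − 10^(2ρ/10)) / (1 + 10^(ρ/10)/η)³. -/
/-!
Writing `10^(ρ/10) = exp (c ρ)` with `c = log 10 / 10`, the derivative of `log (1 + exp (c ρ) / η)`
is `c σ` for the logistic function `σ = exp (c ρ) / (η + exp (c ρ))`, which satisfies the
logistic equation `σ' = c σ (1 - σ)`. Hence `R''' = N c³ σ (1 - σ) (1 - 2σ)`, and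
`σ (1 - σ) (1 - 2σ) = η E (η - E) / (η + E)³` with `E = 10^(ρ/10)` is the claimed closed form.
-/

open Real

noncomputable def logistic (c η x : ℝ) : ℝ := exp (c * x) / (η + exp (c * x))

section

variable {c η : ℝ}

theorem hasDerivAt_exp_const_mul (c x : ℝ) :
    HasDerivAt (fun x ↦ exp (c * x)) (c * exp (c * x)) x := by
  simpa [mul_comm] using ((hasDerivAt_id x).const_mul c).exp

theorem hasDerivAt_log_one_add_exp_div (hη : 0 < η) (x : ℝ) :
    HasDerivAt (fun x ↦ log (1 + exp (c * x) / η)) (c * logistic c η x) x := by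
  have hpos : 0 < 1 + exp (c * x) / η := by positivity
  refine ((((hasDerivAt_exp_const_mul c x).div_const η).const_add 1).log hpos.ne').congr_deriv ?_
  unfold logistic
  field_simp

theorem hasDerivAt_logistic (hη : 0 < η) (x : ℝ) :
    HasDerivAt (logistic c η) (c * (logistic c η x * (1 - logistic c η x))) x := by
  unfold logistic
  have hpos : 0 < η + exp (c * x) := by positivity
  refine ((hasDerivAt_exp_const_mul c x).div ((hasDerivAt_exp_const_mul c x).const_add η)
    hpos.ne').congr_deriv ?_
  field_simp

theorem hasDerivAt_logistic_mul_one_sub (hη : 0 < η) (x : ℝ) :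
    HasDerivAt (fun x ↦ logistic c η x * (1 - logistic c η x))
      (c * (logistic c η x * (1 - logistic c η x) * (1 - 2 * logistic c η x))) x := by
  have hσ := hasDerivAt_logistic (c := c) hη x
  refine (hσ.mul (hσ.const_sub 1)).congr_deriv ?_
  ring

theorem iteratedDeriv_three_log_one_add_exp_div (N : ℝ) (hη : 0 < η) (x : ℝ) :
    iteratedDeriv 3 (fun x ↦ N * log (1 + exp (c * x) / η)) x =
      N * c ^ 3 * (logistic c η x * (1 - logistic c η x) * (1 - 2 * logistic c η x)) := by
  have d1 : deriv (fun x ↦ N * log (1 + exp (c * x) / η)) = fun x ↦ N * c * logistic c η x :=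
    funext fun x ↦ by
      simpa [mul_assoc] using ((hasDerivAt_log_one_add_exp_div hη x).const_mul N).deriv
  have d2 : deriv (fun x ↦ N * c * logistic c η x) =
      fun x ↦ N * c ^ 2 * (logistic c η x * (1 - logistic c η x)) :=
    funext fun x ↦ by
      rw [((hasDerivAt_logistic hη x).const_mul (N * c)).deriv]
      ring
  have d3 : deriv (fun x ↦ N * c ^ 2 * (logistic c η x * (1 - logistic c η x))) =
      fun x ↦ N * c ^ 3 * (logistic c η x * (1 - logistic c η x) * (1 - 2 * logistic c η x)) :=
    funext fun x ↦ by
      rw [((hasDerivAt_logistic_mul_one_sub hη x).const_mul (N * c ^ 2)).deriv]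
      ring
  simp only [iteratedDeriv_succ', iteratedDeriv_zero, d1, d2, d3]

end

theorem third_deriv_sum_rate_general (N η : ℝ) (hη : 0 < η)
    (R : ℝ → ℝ) (hR : ∀ ρ : ℝ, R ρ = N * Real.log (1 + (10 : ℝ) ^ (ρ / 10) / η)) :
    ∀ ρ : ℝ, iteratedDeriv 3 R ρ =
      (N / η ^ 2) * (Real.log 10 / 10) ^ 3 *
        ((η * (10 : ℝ) ^ (ρ / 10) - (10 : ℝ) ^ (2 * ρ / 10)) /
          (1 + (10 : ℝ) ^ (ρ / 10) / η) ^ 3) := by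
  have hpow : ∀ t, (10 : ℝ) ^ t = exp (Real.log 10 / 10 * (10 * t)) := fun t ↦ by
    rw [rpow_def_of_pos (by norm_num)]
    ring_nf
  have hR' : R = fun ρ ↦ N * log (1 + exp (Real.log 10 / 10 * ρ) / η) := funext fun ρ ↦ by
    rw [hR, hpow]
    ring_nf
  intro ρ
  rw [hR', iteratedDeriv_three_log_one_add_exp_div N hη, hpow, hpow,
    show 10 * (2 * ρ / 10) = ρ + ρ by ring, show 10 * (ρ / 10) = ρ by ring, mul_add, exp_add]
  unfold logistic
  field_simp
  ring

/-- Closed form of the third derivative of the sum-rate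
`R(ρ) = N·log(1 + 10^(ρ/10)/η)`. -/
theorem third_deriv_sum_rate (N η : ℝ) (hN : 0 < N) (hη : 0 < η)
    (R : ℝ → ℝ) (hR : ∀ ρ : ℝ, R ρ = N * Real.log (1 + (10 : ℝ) ^ (ρ / 10) / η)) :
    ∀ ρ : ℝ, iteratedDeriv 3 R ρ =
      (N / η ^ 2) * (Real.log 10 / 10) ^ 3 *
        ((η * (10 : ℝ) ^ (ρ / 10) - (10 : ℝ) ^ (2 * ρ / 10)) /
          (1 + (10 : ℝ) ^ (ρ / 10) / η) ^ 3) :=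
  third_deriv_sum_rate_general N η hη R hR
end

section
/- Let N > 0 and η > 0 be real numbers, and define R(ρ) = N · log(1 + 10^(ρ/10)/η) for ρ ∈ ℝ. Then the third derivative of R vanishes at ρ_int = 10·log(η)/log(10); i.e., R'''(ρ_int) = 0. -/
/-!
Put `ρ = ρ_int ± h`. Since `10 ^ (ρ_int / 10) = η`, the argument of the logarithm becomes
`1 + u` and `1 + u⁻¹` with `u = 10 ^ (h / 10)`, and `log (1 + u⁻¹) = log (1 + u) - log u` gives
`R (ρ_int - h) = R (ρ_int + h) - (N log 10 / 10) h`. So `R` is a linear function plus a function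
symmetric about `ρ_int`, and the odd derivatives of order at least three of such a function vanish
at the centre of symmetry.
-/

open Real

section Reflection

variable {F : Type*} [NormedAddCommGroup F] [NormedSpace ℝ F] {f : ℝ → F} {v : F} {n : ℕ}

theorem iteratedDeriv_at_zero_eq_zero_of_comp_neg_eq_sub_smul (hn : Odd n) (hn1 : n ≠ 1)
    (hf : ContDiffAt ℝ n f 0) (hrefl : ∀ x, f (-x) = f x - x • v) :
    iteratedDeriv n f 0 = 0 := by
  have hlin : iteratedDeriv n (fun x : ℝ => x • v) 0 = 0 := by
    rw [iteratedDeriv_smul_const contDiffAt_id, iteratedDeriv_fun_id_zero, if_neg hn1, zero_smul]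
  have h := iteratedDeriv_comp_neg n f 0
  rw [funext hrefl, iteratedDeriv_fun_sub hf (contDiffAt_fun_id.smul_const v), hlin, neg_zero,
    hn.neg_one_pow, neg_one_smul, sub_zero] at h
  have h2 : (2 : ℝ) • iteratedDeriv n f 0 = 0 := by linear_combination (norm := module) h
  exact (smul_eq_zero.mp h2).resolve_left two_ne_zero

theorem iteratedDeriv_eq_zero_of_sub_eq_add_sub_smul {a : ℝ} (hn : Odd n) (hn1 : n ≠ 1)
    (hf : ContDiffAt ℝ n f a) (hrefl : ∀ x, f (a - x) = f (a + x) - x • v) :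
    iteratedDeriv n f a = 0 := by
  have hshift : ContDiffAt ℝ n (fun x => f (a + x)) 0 :=
    ContDiffAt.comp _ (by simpa using hf) (by fun_prop)
  have h := iteratedDeriv_at_zero_eq_zero_of_comp_neg_eq_sub_smul hn hn1 hshift
    (fun x => by rw [← sub_eq_add_neg, hrefl])
  simpa only [iteratedDeriv_comp_const_add, add_zero] using h

end Reflection

theorem Real.log_one_add_inv {u : ℝ} (hu : 0 < u) : log (1 + u⁻¹) = log (1 + u) - log u := by
  rw [← log_div (by positivity) hu.ne', add_div, div_self hu.ne', one_div, add_comm]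

theorem third_deriv_vanishes_at_intercept_general (N η : ℝ) (hη : 0 < η)
    (R : ℝ → ℝ) (hR : ∀ ρ : ℝ, R ρ = N * Real.log (1 + (10 : ℝ) ^ (ρ / 10) / η)) :
    iteratedDeriv 3 R (10 * Real.log η / Real.log 10) = 0 := by
  have hpow₀ : (10 : ℝ) ^ (10 * log η / log 10 / 10) = η := by
    rw [rpow_def_of_pos (by norm_num)]
    field_simp [(log_pos (by norm_num : (1 : ℝ) < 10)).ne']
    exact exp_log hη
  set ρ₀ := 10 * Real.log η / Real.log 10
  have hshift : ∀ x, (10 : ℝ) ^ ((ρ₀ + x) / 10) / η = 10 ^ (x / 10) := fun x => by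
    rw [add_div, rpow_add (by norm_num), hpow₀, mul_div_cancel_left₀ _ hη.ne']
  have hrefl : ∀ x, R (ρ₀ - x) = R (ρ₀ + x) - x • (N * log 10 / 10) := fun x => by
    have hx := hshift (-x)
    rw [← sub_eq_add_neg, neg_div, rpow_neg (by norm_num)] at hx
    rw [hR, hR, hx, hshift, log_one_add_inv (by positivity), log_rpow (by norm_num), smul_eq_mul]
    ring
  have hsmooth : ContDiff ℝ 3 R := by
    rw [funext hR]
    fun_prop (disch := intro; positivity)
  exact iteratedDeriv_eq_zero_of_sub_eq_add_sub_smul (by decide) (by decide)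
    hsmooth.contDiffAt hrefl

/-- The third derivative of the sum-rate `R(ρ) = N·log(1 + 10^(ρ/10)/η)` vanishes at the
intercept `ρ_int = 10·log η / log 10`. -/
theorem third_deriv_vanishes_at_intercept (N η : ℝ) (hN : 0 < N) (hη : 0 < η)
    (R : ℝ → ℝ) (hR : ∀ ρ : ℝ, R ρ = N * Real.log (1 + (10 : ℝ) ^ (ρ / 10) / η)) :
    iteratedDeriv 3 R (10 * Real.log η / Real.log 10) = 0 :=
  third_deriv_vanishes_at_intercept_general N η hη R hR
end

section
/- Let N > 0 and η > 0 be real numbers, and define R(ρ) = N · log(1 + 10^(ρ/10)/η) for ρ ∈ ℝ. Then the second derivative R'' is strictly monotonically decreasing on the interval (ρ_bend, ∞), where ρ_bend = 10·log(η)/log(10). -/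
/-!
Writing `10 ^ (ρ / 10) = exp (c ρ)` with `c = log 10 / 10` and `t = exp (c ρ)`, one computes
`R'' = N c² η t / (η + t)²`. The map `t ↦ t / (η + t)²` is strictly decreasing for `t > η`,
because `s / (η + s)² - t / (η + t)² = (t - s) (s t - η²) / ((η + s)² (η + t)²)`, and `ρ > ρ_bend`
is exactly `exp (c ρ) > η`.
-/

open Real Set

lemma rpow_div_eq_exp_mul {b : ℝ} (hb : 0 < b) (k x : ℝ) : b ^ (x / k) = exp (log b / k * x) := by
  rw [rpow_def_of_pos hb]
  ring_nf

section SumRate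

variable {a c η : ℝ}

lemma hasDerivAt_log_one_add_exp_mul_div (hη : 0 < η) (x : ℝ) :
    HasDerivAt (fun x => a * log (1 + exp (c * x) / η))
      (a * c * exp (c * x) / (η + exp (c * x))) x := by
  have hlin : HasDerivAt (fun x => c * x) c x := by
    simpa using (hasDerivAt_id x).const_mul c
  have harg : 1 + exp (c * x) / η ≠ 0 := by positivity
  refine ((((hlin.exp.div_const η).const_add 1).log harg).const_mul a).congr_deriv ?_
  field_simp

lemma hasDerivAt_mul_exp_mul_div_add_exp (hη : 0 ≤ η) (x : ℝ) :
    HasDerivAt (fun x => a * c * exp (c * x) / (η + exp (c * x)))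
      (a * c ^ 2 * η * exp (c * x) / (η + exp (c * x)) ^ 2) x := by
  have hlin : HasDerivAt (fun x => c * x) c x := by
    simpa using (hasDerivAt_id x).const_mul c
  have hden : η + exp (c * x) ≠ 0 := by positivity
  refine ((hlin.exp.const_mul (a * c)).div (hlin.exp.const_add η) hden).congr_deriv ?_
  ring

lemma iteratedDeriv_two_log_one_add_exp_mul_div (hη : 0 < η) :
    iteratedDeriv 2 (fun x => a * log (1 + exp (c * x) / η)) =
      fun x => a * c ^ 2 * η * exp (c * x) / (η + exp (c * x)) ^ 2 := by
  have hderiv : deriv (fun x => a * log (1 + exp (c * x) / η)) =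
      fun x => a * c * exp (c * x) / (η + exp (c * x)) :=
    funext fun x => (hasDerivAt_log_one_add_exp_mul_div hη x).deriv
  rw [iteratedDeriv_succ, iteratedDeriv_one, hderiv]
  exact funext fun x => (hasDerivAt_mul_exp_mul_div_add_exp hη.le x).deriv

end SumRate

lemma strictAntiOn_mul_div_add_sq {K η : ℝ} (hK : 0 < K) (hη : 0 ≤ η) :
    StrictAntiOn (fun t => K * t / (η + t) ^ 2) (Ioi η) := by
  intro s hs t ht hst
  simp only [mem_Ioi] at hs ht
  have hprod : η ^ 2 < s * t := by nlinarith
  rw [div_lt_div_iff₀ (by nlinarith) (by nlinarith)]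
  nlinarith [mul_pos hK (mul_pos (sub_pos.mpr hst) (sub_pos.mpr hprod))]

/-- The second derivative of the sum-rate `R(ρ) = N·log(1 + 10^(ρ/10)/η)` is strictly
monotonically decreasing on `(ρ_bend, ∞)`, where `ρ_bend = 10·log η / log 10`. -/
theorem second_deriv_strictAnti (N η : ℝ) (hN : 0 < N) (hη : 0 < η)
    (R : ℝ → ℝ) (hR : ∀ ρ : ℝ, R ρ = N * Real.log (1 + (10 : ℝ) ^ (ρ / 10) / η)) :
    StrictAntiOn (iteratedDeriv 2 R) (Set.Ioi (10 * Real.log η / Real.log 10)) := by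
  set c := log 10 / 10
  have hc : 0 < c := by positivity
  have hR_exp : R = fun ρ => N * log (1 + exp (c * ρ) / η) :=
    funext fun ρ => by rw [hR, rpow_div_eq_exp_mul (by norm_num)]
  have hbend : 10 * log η / log 10 = log η / c := by
    simp only [c]
    field_simp
  have hmaps : MapsTo (fun ρ => exp (c * ρ)) (Ioi (log η / c)) (Ioi η) := fun ρ hρ => by
    rwa [mem_Ioi, div_lt_iff₀' hc, log_lt_iff_lt_exp hη] at hρ
  rw [hR_exp, iteratedDeriv_two_log_one_add_exp_mul_div hη, hbend]
  exact (strictAntiOn_mul_div_add_sq (by positivity) hη.le).comp_strictMonoOn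
    (fun x _ y _ hxy => exp_lt_exp.mpr (mul_lt_mul_of_pos_left hxy hc)) hmaps
end

section
/- The function x ↦ E₁(x) + γ + log(x), where E₁(x) = ∫ₓ^∞ e^(−t)/t dt and γ is the Euler–Mascheroni constant, tends to 0 as x → 0 from the right; i.e., E₁(x) ≅ −γ − log(x) as x → 0⁺. -/
open Real Filter

/-- The exponential integral `E₁(x) = ∫ₓ^∞ e^(−t)/t dt`. -/
noncomputable def expIntegralE1 (x : ℝ) : ℝ := ∫ t in Set.Ioi x, Real.exp (-t) / t

open MeasureTheory Set Topology

/-!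
Integrating by parts, `E₁(x) = ∫ₓ^∞ log t e^(−t) dt − e^(−x) log x`, and
`∫₀^∞ log t e^(−t) dt = Γ'(1) = −γ`. Hence
`E₁(x) + γ + log x = (1 − e^(−x)) log x − ∫₀ˣ log t e^(−t) dt`, and both terms vanish as
`x → 0⁺`: the integrand is integrable at `0`, and `0 ≤ 1 − e^(−x) ≤ x` while `x log x → 0`.
-/

theorem tendsto_intervalIntegral_nhdsGT {E : Type*} [NormedAddCommGroup E] [NormedSpace ℝ E]
    {μ : Measure ℝ} [NullSingletonClass μ] {f : ℝ → E} {a b : ℝ} (hab : a < b)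
    (hf : IntervalIntegrable f μ a b) :
    Tendsto (fun x => ∫ t in a..x, f t ∂μ) (𝓝[>] a) (𝓝 0) := by
  have hcont := intervalIntegral.continuousOn_primitive_interval' hf left_mem_uIcc a left_mem_uIcc
  rw [uIcc_of_le hab.le] at hcont
  simpa using (hcont.mono_of_mem_nhdsWithin (Icc_mem_nhdsGT hab)).tendsto

theorem integrableOn_log_mul_exp_neg :
    IntegrableOn (fun t => log t * exp (-t)) (Ioi 0) := by
  rw [← Ioc_union_Ioi_eq_Ioi zero_le_one, integrableOn_union]
  constructor
  · rw [← intervalIntegrable_iff_integrableOn_Ioc_of_le zero_le_one]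
    exact intervalIntegral.intervalIntegrable_log'.mul_continuousOn (by fun_prop)
  · have hGamma := (Real.GammaIntegral_convergent two_pos).mono_set (Ioi_subset_Ioi zero_le_one)
    refine hGamma.mono' (by fun_prop) ?_
    filter_upwards [ae_restrict_mem measurableSet_Ioi] with t (ht : 1 < t)
    calc ‖log t * exp (-t)‖ = exp (-t) * log t := by
          rw [norm_mul, norm_of_nonneg (log_nonneg ht.le), norm_of_nonneg (exp_pos _).le, mul_comm]
      _ ≤ exp (-t) * t := by gcongr; linarith [log_le_sub_one_of_pos (zero_lt_one.trans ht)]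
      _ = exp (-t) * t ^ ((2 : ℝ) - 1) := by norm_num

theorem integral_log_mul_exp_neg :
    ∫ t in Ioi 0, log t * exp (-t) = -eulerMascheroniConstant := by
  have hGammaIntegral := Complex.hasDerivAt_GammaIntegral (s := 1) (by norm_num)
  have hGamma : Complex.Gamma =ᶠ[𝓝 1] Complex.GammaIntegral := by
    filter_upwards [(isOpen_lt continuous_const Complex.continuous_re).mem_nhds
      (by norm_num : (0 : ℝ) < (1 : ℂ).re)] with s hs
    exact Complex.Gamma_eq_integral hs
  have := (hGammaIntegral.congr_of_eventuallyEq hGamma).unique Complex.hasDerivAt_Gamma_one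
  simp only [sub_self, Complex.cpow_zero, one_mul, ← Complex.ofReal_mul,
    integral_complex_ofReal] at this
  exact_mod_cast this

theorem integrableOn_exp_neg_div_Ioi {x : ℝ} (hx : 0 < x) :
    IntegrableOn (fun t => exp (-t) / t) (Ioi x) := by
  refine ((exp_neg_integrableOn_Ioi x one_pos).mul_const x⁻¹).mono'
    (Measurable.aestronglyMeasurable (by fun_prop)) ?_
  filter_upwards [ae_restrict_mem measurableSet_Ioi] with t (ht : x < t)
  rw [norm_of_nonneg (div_nonneg (exp_pos _).le (hx.trans ht).le), neg_one_mul, div_eq_mul_inv]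
  gcongr

theorem tendsto_exp_neg_mul_log_atTop : Tendsto (fun t => exp (-t) * log t) atTop (𝓝 0) := by
  have h := tendsto_pow_mul_exp_neg_atTop_nhds_zero 1
  simp only [pow_one] at h
  refine squeeze_zero' ?_ ?_ h
  · filter_upwards [eventually_ge_atTop 1] with t ht
    exact mul_nonneg (exp_pos _).le (log_nonneg ht)
  · filter_upwards [eventually_gt_atTop 0] with t ht
    rw [mul_comm t]
    gcongr
    linarith [log_le_sub_one_of_pos ht]

theorem expIntegralE1_eq_integral_log_mul_exp_neg_sub {x : ℝ} (hx : 0 < x) :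
    expIntegralE1 x = (∫ t in Ioi x, log t * exp (-t)) - exp (-x) * log x := by
  have hderiv : ∀ t ∈ Ioi x, HasDerivAt (fun t => -(exp (-t) * log t))
      (log t * exp (-t) - exp (-t) / t) t := fun t ht => by
    have := (((hasDerivAt_neg t).exp).mul (hasDerivAt_log (hx.trans ht).ne')).neg
    exact this.congr_deriv (by ring)
  have hg := integrableOn_log_mul_exp_neg.mono_set (Ioi_subset_Ioi hx.le)
  have hibp := integral_Ioi_of_hasDerivAt_of_tendsto (by fun_prop (disch := exact hx.ne'))
    hderiv (hg.sub (integrableOn_exp_neg_div_Ioi hx))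
    (by simpa using tendsto_exp_neg_mul_log_atTop.neg)
  rw [integral_sub hg (integrableOn_exp_neg_div_Ioi hx)] at hibp
  rw [expIntegralE1]
  linarith

theorem expIntegralE1_add_eulerMascheroniConstant_add_log {x : ℝ} (hx : 0 < x) :
    expIntegralE1 x + eulerMascheroniConstant + log x =
      (1 - exp (-x)) * log x - ∫ t in 0..x, log t * exp (-t) := by
  have hsplit := intervalIntegral.integral_interval_add_Ioi integrableOn_log_mul_exp_neg
    (integrableOn_log_mul_exp_neg.mono_set (Ioi_subset_Ioi hx.le))
  rw [integral_log_mul_exp_neg] at hsplit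
  rw [expIntegralE1_eq_integral_log_mul_exp_neg_sub hx]
  linarith

theorem tendsto_one_sub_exp_neg_mul_log_nhdsGT_zero :
    Tendsto (fun x => (1 - exp (-x)) * log x) (𝓝[>] 0) (𝓝 0) := by
  have hmul_log : Tendsto (fun x => x * log x) (𝓝[>] 0) (𝓝 0) := by
    simpa using continuous_mul_log.continuousWithinAt.tendsto (x := 0) (s := Ioi 0)
  refine squeeze_zero_norm' ?_ (by simpa using hmul_log.norm)
  filter_upwards [self_mem_nhdsWithin] with x (hx : 0 < x)
  have hexp_le : exp (-x) ≤ 1 := exp_le_one_iff.2 (by linarith)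
  rw [norm_mul, norm_of_nonneg (sub_nonneg.2 hexp_le), abs_of_pos hx, norm_eq_abs]
  gcongr
  linarith [add_one_le_exp (-x)]

/-- `E₁(x) ≅ −γ − log x` as `x → 0⁺`: the difference `E₁(x) + γ + log x` tends to `0`
as `x → 0` from the right, where `γ` is the Euler–Mascheroni constant. -/
theorem expIntegral_asymptotic_zero :
    Tendsto (fun x : ℝ => expIntegralE1 x + Real.eulerMascheroniConstant + Real.log x)
      (nhdsWithin 0 (Set.Ioi 0)) (nhds 0) := by
  have hintegral := tendsto_intervalIntegral_nhdsGT zero_lt_one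
    ((intervalIntegrable_iff_integrableOn_Ioc_of_le zero_le_one).2
      (integrableOn_log_mul_exp_neg.mono_set Ioc_subset_Ioi_self))
  have := tendsto_one_sub_exp_neg_mul_log_nhdsGT_zero.sub hintegral
  rw [sub_zero] at this
  refine this.congr' ?_
  filter_upwards [self_mem_nhdsWithin] with x hx
  exact (expIntegralE1_add_eulerMascheroniConstant_add_log hx).symm
end
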